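/- arXiv:1910.00769 — 2 statements merged into one kernel-verified Lean document; each statement's English description precedes it below -/
import Mathlib

section
/- Let R be a small preadditive category and 𝒱 an FI-module over R. Define H_0(𝒱)(S) as the cokernel of the map ⊕_{φ: T ↪ S, |T| < |S|} 𝒱(T) → 𝒱(S). Then 𝒱 = 0 if and only if H_0(𝒱) = 0; moreover a morphism f in FI_R is an epimorphism if and only if H_0(f) is an epimorphism. -/
open CategoryTheory CategoryTheory.Limits Opposite

/-- The category `FI` of finite sets and injections. -/
structure FI : Type 1 where
  carrier : Type
  [fin : Fintype carrier]

attribute [instance] FI.fin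

instance : CoeSort FI Type := ⟨FI.carrier⟩

instance : Category FI where
  Hom S T := {f : S.carrier → T.carrier // Function.Injective f}
  id S := ⟨id, fun _ _ h => h⟩
  comp f g := ⟨g.1 ∘ f.1, g.2.comp f.2⟩

@[ext] lemma FI.hom_ext {S T : FI} (f g : S ⟶ T) (h : f.1 = g.1) : f = g := Subtype.ext h

@[simp] lemma FI.comp_val {S T U : FI} (f : S ⟶ T) (g : T ⟶ U) : (f ≫ g).1 = g.1 ∘ f.1 := rfl
@[simp] lemma FI.id_val (S : FI) : (𝟙 S : S ⟶ S).1 = id := rfl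

/-- The finite set `[n] = {1, …, n}` as an object of `FI`. -/
def FI.of (n : ℕ) : FI := ⟨Fin n⟩

/-- The category of right modules over a small preadditive category `R`
("ring with several objects"): `AddCommGrp`-valued presheaves on `R`. -/
abbrev ModR (R : Type) [SmallCategory R] [Preadditive R] := Rᵒᵖ ⥤ AddCommGrpCat.{0}

/-- The category `FI_R` of `FI`-modules over `R`. -/
abbrev FIMod (R : Type) [SmallCategory R] [Preadditive R] := FI ⥤ ModR R

variable (R : Type) [SmallCategory R] [Preadditive R]

/-- The free `FI`-module `_dM_r` over `R`: it sends a finite set `S` to the direct sum of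
copies of the representable right `R`-module `H_r = R(-, r)`, indexed by the set of
injections `[d] ↪ S`. -/
noncomputable def genM (d : ℕ) (r : R) : FIMod R where
  obj S := ∐ fun _ : FI.of d ⟶ S => preadditiveYoneda.obj r
  map {S T} ψ := Sigma.desc fun φ =>
    Sigma.ι (fun _ : FI.of d ⟶ T => preadditiveYoneda.obj r) (φ ≫ ψ)
  map_id S := by
    ext φ
    simp
  map_comp {S T U} ψ χ := by
    ext φ
    simp

/-- The value `𝒱(d)(r)` of an `FI`-module at `[d]` and `r ∈ R`, as an abelian group. -/
abbrev FIModVal (𝒱 : FIMod R) (d : ℕ) (r : R) : AddCommGrpCat.{0} :=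
  (𝒱.obj (FI.of d)).obj (op r)

/-- Index for the collection of injections `φ : T ↪ S` with `|T| < |S|` (up to the skeleton
`[m]`, `m < |S|`, of the category of such `T`). -/
def belowIdx (S : FI) : Type := Σ m : Fin (Fintype.card S.carrier), (FI.of m ⟶ S)

/-- The canonical map `⊕_{φ : T ↪ S, |T| < |S|} 𝒱(T) ⟶ 𝒱(S)`. -/
noncomputable def belowMap (𝒱 : FIMod R) (S : FI) :
    (∐ fun p : belowIdx S => 𝒱.obj (FI.of p.1)) ⟶ 𝒱.obj S :=
  Sigma.desc fun p => 𝒱.map p.2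

lemma comp_cokernelπ_belowMap (𝒱 : FIMod R) {T : FI} {m : ℕ}
    (hm : m < Fintype.card T.carrier) (f : FI.of m ⟶ T) :
    𝒱.map f ≫ cokernel.π (belowMap R 𝒱 T) = 0 := by
  have h : 𝒱.map f
      = Sigma.ι (fun p : belowIdx T => 𝒱.obj (FI.of p.1)) ⟨⟨m, hm⟩, f⟩ ≫ belowMap R 𝒱 T := by
    simp [belowMap]
  rw [h, Category.assoc, cokernel.condition, comp_zero]

lemma card_le_of_hom {S T : FI} (f : S ⟶ T) :
    Fintype.card S.carrier ≤ Fintype.card T.carrier :=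
  Fintype.card_le_of_injective f.1 f.2

@[simp] lemma ι_belowMap (𝒱 : FIMod R) (S : FI) (p : belowIdx S) :
    Sigma.ι (fun q : belowIdx S => 𝒱.obj (FI.of q.1)) p ≫ belowMap R 𝒱 S = 𝒱.map p.2 :=
  Sigma.ι_desc _ _

lemma belowMap_comp_π (𝒱 : FIMod R) {S T : FI} (ψ : S ⟶ T) :
    belowMap R 𝒱 S ≫ 𝒱.map ψ ≫ cokernel.π (belowMap R 𝒱 T) = 0 := by
  apply Sigma.hom_ext
  intro p
  rw [comp_zero, ← Category.assoc, ι_belowMap, ← Functor.map_comp_assoc]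
  exact comp_cokernelπ_belowMap R 𝒱 (lt_of_lt_of_le p.1.2 (card_le_of_hom ψ)) (p.2 ≫ ψ)

lemma belowMap_comp_app_π (𝒱 𝒲 : FIMod R) (f : 𝒱 ⟶ 𝒲) (S : FI) :
    belowMap R 𝒱 S ≫ f.app S ≫ cokernel.π (belowMap R 𝒲 S) = 0 := by
  apply Sigma.hom_ext
  intro p
  rw [comp_zero, ← Category.assoc, ι_belowMap, ← Category.assoc, f.naturality, Category.assoc,
    comp_cokernelπ_belowMap R 𝒲 p.1.2 p.2, comp_zero]

/-- The `FI`-module `H₀(𝒱)`, sending `S` to `coker (⊕_{φ : T ↪ S, |T| < |S|} 𝒱(T) → 𝒱(S))`. -/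
noncomputable def H0obj (𝒱 : FIMod R) : FIMod R where
  obj S := cokernel (belowMap R 𝒱 S)
  map {S T} ψ := cokernel.desc _ (𝒱.map ψ ≫ cokernel.π (belowMap R 𝒱 T))
    (belowMap_comp_π R 𝒱 ψ)
  map_id S := by
    apply coequalizer.hom_ext
    simp
  map_comp {S T U} ψ χ := by
    apply coequalizer.hom_ext
    simp

/-- The functor `H₀ : FI_R ⥤ FI_R`. -/
noncomputable def H0 : FIMod R ⥤ FIMod R where
  obj 𝒱 := H0obj R 𝒱
  map {𝒱 𝒲} f :=
  { app := fun S => cokernel.desc _ (f.app S ≫ cokernel.π (belowMap R 𝒲 S))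
      (belowMap_comp_app_π R 𝒱 𝒲 f S)
    naturality := fun S T ψ => by
      apply coequalizer.hom_ext
      simp only [H0obj, cokernel.π_desc_assoc, cokernel.π_desc, Category.assoc]
      rw [← Category.assoc, f.naturality, Category.assoc]
  }
  map_id 𝒱 := by
    apply NatTrans.ext
    funext S
    apply coequalizer.hom_ext
    simp [H0obj]
  map_comp {𝒱 𝒲 𝒳} f g := by
    apply NatTrans.ext
    funext S
    apply coequalizer.hom_ext
    simp [H0obj]

/-- The shift functor `S ↦ S ⊔ [-a]` on `FI`, where `[-a]` is a fixed `a`-element set. -/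
def FI.shift (a : ℕ) : FI ⥤ FI where
  obj S := ⟨S.carrier ⊕ Fin a⟩
  map f := ⟨Sum.map f.1 id, f.2.sumMap (fun _ _ h => h)⟩
  map_id S := by
    apply FI.hom_ext
    funext x
    cases x <;> rfl
  map_comp f g := by
    apply FI.hom_ext
    funext x
    cases x <;> rfl

/-- The positive shift functor `𝕊^a` on `FI`-modules, `(𝕊^a 𝒱)(S) = 𝒱(S ⊔ [-a])`. -/
def shiftFun (a : ℕ) : FIMod R ⥤ FIMod R :=
  (Functor.whiskeringLeft FI FI (ModR R)).obj (FI.shift a)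

/-- The inclusion `S ↪ S ⊔ [-a]` as a natural transformation `𝟭 FI ⟶ FI.shift a`. -/
def FI.shiftIncl (a : ℕ) : 𝟭 FI ⟶ FI.shift a where
  app S := ⟨Sum.inl, fun _ _ h => Sum.inl_injective h⟩
  naturality S T f := by
    apply FI.hom_ext
    funext x
    rfl

/-- The canonical morphism `ψ_a : 𝒱 ⟶ 𝕊^a 𝒱` induced by the inclusions `S ↪ S ⊔ [-a]`. -/
def shiftIncl (a : ℕ) (𝒱 : FIMod R) : 𝒱 ⟶ (shiftFun R a).obj 𝒱 :=
  𝒱.leftUnitor.inv ≫ Functor.whiskerRight (FI.shiftIncl a) 𝒱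

/-- Finitely generated object of a category: `Hom(X, -)` preserves filtered colimits of
monomorphisms, expressed via the factorization property. -/
def IsFGObj {A : Type*} [Category A] (X : A) : Prop :=
  ∀ (J : Type) [SmallCategory J] [IsFiltered J] (D : J ⥤ A),
    (∀ ⦃j j' : J⦄ (f : j ⟶ j'), Mono (D.map f)) →
    ∀ (c : Cocone D), IsColimit c →
    ∀ (g : X ⟶ c.pt), ∃ (j : J) (g' : X ⟶ D.obj j), g' ≫ c.ι.app j = g

/-- An `FI`-module `𝒱` is generated in degree `≤ d` if it admits an epimorphism from a
coproduct of free modules `_{d_i}M_{r_i}` with all `d_i ≤ d`. -/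
def GenInDeg (d : ℕ) (𝒱 : FIMod R) : Prop :=
  ∃ (ι : Type) (ds : ι → ℕ) (rs : ι → R), (∀ i, ds i ≤ d) ∧
    ∃ e : (∐ fun i : ι => genM R (ds i) (rs i)) ⟶ 𝒱, Epi e

/-!
Both statements reduce to the second: `𝒱 = 0` iff its zero endomorphism is epi, and `H₀` sends
zero morphisms to zero morphisms. For the second, `H₀` preserves epimorphisms since every
`cokernel.π` is epi. Conversely, by induction on `|S|`: the maps `f([m])`, `m < |S|`, are epi,
hence so is their coproduct, and an epimorphism between the sources of `belowMap 𝒱 S` and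
`belowMap 𝒲 S` which induces an epimorphism on cokernels forces `f(S)` to be epi.
-/

lemma isZero_iff_epi_zero {C : Type*} [Category C] [HasZeroMorphisms C] (X : C) :
    IsZero X ↔ Epi (0 : X ⟶ X) := by
  refine ⟨fun h => h.epi 0, fun _ => ?_⟩
  rw [IsZero.iff_id_eq_zero, ← cancel_epi (0 : X ⟶ X)]
  simp

lemma epi_of_epi_of_epi_cokernel_map {C : Type*} [Category C] [Preadditive C]
    {X Y X' Y' : C} (u : X ⟶ Y) (u' : X' ⟶ Y') [HasCokernel u] [HasCokernel u']
    (p : X ⟶ X') (q : Y ⟶ Y') (w : u ≫ q = p ≫ u') [Epi p]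
    [Epi (cokernel.map u u' p q w)] : Epi q := by
  refine Preadditive.epi_of_cancel_zero q fun h hq => ?_
  have hu' : u' ≫ h = 0 := by
    rw [← cancel_epi p, ← reassoc_of% w, hq, comp_zero, comp_zero]
  have hmap : cokernel.map u u' p q w ≫ cokernel.desc u' h hu' = 0 := by
    ext
    simp [hq]
  rw [← cokernel.π_desc u' h hu', (cancel_epi _).1 (hmap.trans comp_zero.symm), comp_zero]

lemma FI.card_of (m : ℕ) : Fintype.card (FI.of m).carrier = m :=
  Fintype.card_fin m

lemma FI.induction_on_card {P : FI → Prop}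
    (step : ∀ S : FI, (∀ m < Fintype.card S.carrier, P (FI.of m)) → P S) (S : FI) : P S := by
  induction h : Fintype.card S.carrier using Nat.strong_induction_on generalizing S with
  | _ n ih =>
    exact step S fun m hm => ih m (h ▸ hm) (FI.of m) (FI.card_of m)

lemma belowMap_naturality {𝒱 𝒲 : FIMod R} (f : 𝒱 ⟶ 𝒲) (S : FI) :
    belowMap R 𝒱 S ≫ f.app S
      = (Limits.Sigma.map fun p : belowIdx S => f.app (FI.of p.1)) ≫ belowMap R 𝒲 S := by
  refine Sigma.hom_ext _ _ fun p => ?_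
  rw [← Category.assoc, ι_belowMap, Sigma.ι_map_assoc, ι_belowMap, f.naturality]

lemma π_H0_map_app {𝒱 𝒲 : FIMod R} (f : 𝒱 ⟶ 𝒲) (S : FI) :
    cokernel.π (belowMap R 𝒱 S) ≫ ((H0 R).map f).app S
      = f.app S ≫ cokernel.π (belowMap R 𝒲 S) :=
  cokernel.π_desc _ _ _

lemma H0_map_zero (𝒱 𝒲 : FIMod R) : (H0 R).map (0 : 𝒱 ⟶ 𝒲) = 0 := by
  ext S : 2
  apply coequalizer.hom_ext
  rw [π_H0_map_app, NatTrans.app_zero, zero_comp]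
  exact comp_zero.symm

instance H0_map_epi {𝒱 𝒲 : FIMod R} (f : 𝒱 ⟶ 𝒲) [Epi f] : Epi ((H0 R).map f) := by
  rw [NatTrans.epi_iff_epi_app]
  intro S
  have : Epi (f.app S) := (NatTrans.epi_iff_epi_app f).1 ‹_› S
  have : Epi (cokernel.π (belowMap R 𝒱 S) ≫ ((H0 R).map f).app S) := by
    rw [π_H0_map_app]
    exact epi_comp' ‹_› (coequalizer.π_epi ..)
  exact epi_of_epi (cokernel.π _) _

lemma epi_app_of_epi_H0_map {𝒱 𝒲 : FIMod R} (f : 𝒱 ⟶ 𝒲) [Epi ((H0 R).map f)] (S : FI) :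
    Epi (f.app S) := by
  induction S using FI.induction_on_card with
  | step S ih =>
    have : ∀ p : belowIdx S, Epi (f.app (FI.of p.1)) := fun p => ih p.1 p.1.2
    have : Epi (cokernel.map _ _ _ (f.app S) (belowMap_naturality R f S)) :=
      (NatTrans.epi_iff_epi_app ((H0 R).map f)).1 inferInstance S
    exact epi_of_epi_of_epi_cokernel_map _ _ _ _ (belowMap_naturality R f S)

lemma epi_iff_epi_H0_map {𝒱 𝒲 : FIMod R} (f : 𝒱 ⟶ 𝒲) : Epi f ↔ Epi ((H0 R).map f) := by
  refine ⟨fun _ => inferInstance, fun _ => ?_⟩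
  rw [NatTrans.epi_iff_epi_app]
  exact epi_app_of_epi_H0_map R f

/-- For an `FI`-module `𝒱` over `R`, one has `𝒱 = 0` iff `H₀(𝒱) = 0`;
moreover a morphism `f` in `FI_R` is an epimorphism iff `H₀(f)` is an epimorphism. -/
theorem statement8 :
    (∀ 𝒱 : FIMod R, IsZero 𝒱 ↔ IsZero ((H0 R).obj 𝒱)) ∧
    (∀ (𝒱 𝒲 : FIMod R) (f : 𝒱 ⟶ 𝒲), Epi f ↔ Epi ((H0 R).map f)) := by
  refine ⟨fun 𝒱 => ?_, fun _ _ => epi_iff_epi_H0_map R⟩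
  rw [isZero_iff_epi_zero, isZero_iff_epi_zero, ← H0_map_zero]
  exact epi_iff_epi_H0_map R 0
end

section
/- Let Mod-R be locally noetherian and (T,F) a hereditary torsion theory on Mod-R. An FI-module 𝓛 over R is closed with respect to the Serre subcategory T̂^0 = {𝒱 ∈ FI_R : 𝒱_n ∈ T for all n ≥ 0} if and only if 𝓛(S) is a T-closed object of Mod-R for every finite set S. -/
open CategoryTheory CategoryTheory.Limits Opposite

variable (R : Type) [SmallCategory R] [Preadditive R]

/-- A morphism `u` is a `C`-isomorphism if both its kernel and cokernel satisfy `C`. -/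
def IsCIso {A : Type*} [Category A] [Abelian A] (C : A → Prop) {X Y : A} (u : X ⟶ Y) : Prop :=
  C (kernel u) ∧ C (cokernel u)

/-- An object `L` is `C`-closed if precomposition with any `C`-isomorphism `u` induces a
bijection `Hom(B, L) → Hom(A, L)`. -/
def IsCClosed {A : Type*} [Category A] [Abelian A] (C : A → Prop) (L : A) : Prop :=
  ∀ ⦃X Y : A⦄ (u : X ⟶ Y), IsCIso C u → Function.Bijective (fun g : Y ⟶ L => u ≫ g)

/-!
Evaluation at `c` has the left adjoint `X ↦ (c' ↦ ∐_{c ⟶ c'} X)`. Coproducts are exact and a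
torsion class is closed under coproducts (an object is torsion iff it maps trivially to every
torsion-free object), so this left adjoint turns `T`-isomorphisms into objectwise
`T`-isomorphisms, and adjunction transfers closedness of `𝓛` to closedness of `𝓛(c)`.
Conversely, if every `𝓛(c)` is `T`-closed, a morphism `X ⟶ 𝓛` extends along an objectwise
`T`-isomorphism `u` componentwise, and the components are natural because precomposition with
`u.app c` is injective.
-/

namespace CategoryTheory

lemma Adjunction.bijective_comp_map_iff {C D : Type*} [Category C] [Category D] {G : C ⥤ D}
    {H : D ⥤ C} (adj : G ⊣ H) {X Y : C} (u : X ⟶ Y) (L : D) :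
    Function.Bijective (fun g : G.obj Y ⟶ L => G.map u ≫ g) ↔
      Function.Bijective (fun g : Y ⟶ H.obj L => u ≫ g) := by
  have : (fun g : Y ⟶ H.obj L => u ≫ g) =
      adj.homEquiv X L ∘ (fun g => G.map u ≫ g) ∘ (adj.homEquiv Y L).symm := by
    funext g
    simp only [Function.comp_apply, ← adj.homEquiv_naturality_left_symm, Equiv.apply_symm_apply]
  rw [this, EquivLike.comp_bijective, EquivLike.bijective_comp]

variable {C : Type*} [Category C]

lemma NatTrans.bijective_comp_of_bijective_app {D : Type*} [Category D] {X Y L : C ⥤ D}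
    (u : X ⟶ Y) (hu : ∀ c c', Function.Bijective (fun g : Y.obj c ⟶ L.obj c' => u.app c ≫ g)) :
    Function.Bijective (fun g : Y ⟶ L => u ≫ g) := by
  refine ⟨fun g g' h => NatTrans.ext (funext fun c => (hu c c).1 (by simpa using congr_app h c)),
    fun f => ?_⟩
  choose g hg using fun c => (hu c c).2 (f.app c)
  refine ⟨⟨g, fun c c' ψ => (hu c c').1 ?_⟩, NatTrans.ext (funext hg)⟩
  simp only [← NatTrans.naturality_assoc, hg, NatTrans.naturality, reassoc_of% (hg c)]

variable {A : Type*} [Category A] [Abelian A] {T F : A → Prop}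
  (hhom : ∀ X Y : A, T X → F Y → ∀ f : X ⟶ Y, f = 0)
  (hses : ∀ X : A, ∃ s : Subobject X, T (s : A) ∧ F (cokernel s.arrow))
  (hhered : ∀ {X Y : A} (f : X ⟶ Y), Mono f → T Y → T X)

include hhered in
lemma isCIso_objectwise_iff {X Y : C ⥤ A} (u : X ⟶ Y) :
    IsCIso (fun L : C ⥤ A => ∀ c, T (L.obj c)) u ↔ ∀ c, IsCIso T (u.app c) :=
  ⟨fun hu c => ⟨hhered (PreservesKernel.iso ((evaluation C A).obj c) u).inv inferInstance (hu.1 c),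
      hhered (PreservesCokernel.iso ((evaluation C A).obj c) u).inv inferInstance (hu.2 c)⟩,
    fun hu => ⟨fun c => hhered (PreservesKernel.iso ((evaluation C A).obj c) u).hom
        inferInstance (hu c).1,
      fun c => hhered (PreservesCokernel.iso ((evaluation C A).obj c) u).hom
        inferInstance (hu c).2⟩⟩

include hses hhered in
lemma torsion_of_forall_hom_eq_zero {X : A} (hX : ∀ Y, F Y → ∀ f : X ⟶ Y, f = 0) : T X := by
  obtain ⟨s, hs, hF⟩ := hses X
  have : Epi s.arrow := Abelian.epi_of_cokernel_π_eq_zero _ (hX _ hF _)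
  have : IsIso s.arrow := isIso_of_mono_of_epi _
  exact hhered (inv s.arrow) inferInstance hs

include hhom hses hhered in
lemma torsion_colimit_discrete {ι : Type*} (K : Discrete ι ⥤ A) [HasColimit K]
    (hK : ∀ j, T (K.obj j)) : T (colimit K) :=
  torsion_of_forall_hom_eq_zero hses hhered fun _ hY _ =>
    colimit.hom_ext fun j => by rw [comp_zero]; exact hhom _ _ (hK j) hY _

include hhom hses hhered in
lemma isCIso_colimMap {ι : Type*} [HasColimitsOfShape (Discrete ι) A]
    [HasExactColimitsOfShape (Discrete ι) A] {K L : Discrete ι ⥤ A} (φ : K ⟶ L)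
    (hφ : ∀ j, IsCIso T (φ.app j)) : IsCIso T (colimMap φ) := by
  obtain ⟨hker, hcoker⟩ := (isCIso_objectwise_iff hhered φ).2 hφ
  exact ⟨hhered (PreservesKernel.iso colim φ).inv inferInstance
      (torsion_colimit_discrete hhom hses hhered _ hker),
    hhered (PreservesCokernel.iso colim φ).inv inferInstance
      (torsion_colimit_discrete hhom hses hhered _ hcoker)⟩

variable [∀ a b : C, HasCoproductsOfShape (a ⟶ b) A]
  [∀ a b : C, HasExactColimitsOfShape (Discrete (a ⟶ b)) A]

include hhom hses hhered in
lemma isCIso_evaluationLeftAdjoint_map (c : C) {X Y : A} (u : X ⟶ Y) (hu : IsCIso T u) :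
    IsCIso (fun L : C ⥤ A => ∀ c, T (L.obj c)) ((evaluationLeftAdjoint A c).map u) := by
  refine (isCIso_objectwise_iff hhered _).2 fun c' => ?_
  have : ((evaluationLeftAdjoint A c).map u).app c' = Limits.Sigma.map fun _ : c ⟶ c' => u :=
    Sigma.hom_ext _ _ fun _ => by simp [evaluationLeftAdjoint]
  rw [this]
  exact isCIso_colimMap hhom hses hhered _ fun _ => hu

include hhom hses hhered in
theorem isCClosed_objectwise_iff (L : C ⥤ A) :
    IsCClosed (fun L : C ⥤ A => ∀ c, T (L.obj c)) L ↔ ∀ c, IsCClosed T (L.obj c) :=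
  ⟨fun hL c _ _ u hu => ((evaluationAdjunctionRight A c).bijective_comp_map_iff u L).1
      (hL _ (isCIso_evaluationLeftAdjoint_map hhom hses hhered c u hu)),
    fun hL _ _ u hu => NatTrans.bijective_comp_of_bijective_app u fun c c' =>
      hL c' (u.app c) ((isCIso_objectwise_iff hhered u).1 hu c)⟩

end CategoryTheory

noncomputable def FI.ofCardIso (S : FI) : FI.of (Fintype.card S.carrier) ≅ S :=
  let e := (Fintype.equivFin S.carrier).symm
  { hom := ⟨e, e.injective⟩
    inv := ⟨e.symm, e.symm.injective⟩
    hom_inv_id := FI.hom_ext _ _ (funext e.symm_apply_apply)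
    inv_hom_id := FI.hom_ext _ _ (funext e.apply_symm_apply) }

theorem statement18
    (T F : ModR R → Prop)
    (_hhom : ∀ (X Y : ModR R), T X → F Y → ∀ f : X ⟶ Y, f = 0)
    (_hses : ∀ X : ModR R, ∃ s : Subobject X, T (s : ModR R) ∧ F (cokernel s.arrow))
    (_hhered : ∀ {X Y : ModR R} (f : X ⟶ Y), Mono f → T Y → T X)
    (𝓛 : FIMod R) :
    IsCClosed (fun 𝒱 : FIMod R => ∀ n : ℕ, T (𝒱.obj (FI.of n))) 𝓛 ↔
      ∀ S : FI, IsCClosed T (𝓛.obj S) := by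
  have hskeleton : (fun 𝒱 : FIMod R => ∀ n : ℕ, T (𝒱.obj (FI.of n))) =
      fun 𝒱 => ∀ S, T (𝒱.obj S) := by
    funext 𝒱
    exact propext ⟨fun h S => _hhered (𝒱.mapIso (FI.ofCardIso S)).inv inferInstance (h _),
      fun h n => h _⟩
  rw [hskeleton]
  exact isCClosed_objectwise_iff _hhom _hses _hhered 𝓛
end
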